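/- arXiv:1508.04107 — 5 statements merged into one kernel-verified Lean document; each statement's English description precedes it below -/
import Mathlib

section
/- Let k be a commutative ring and let S be a set of n×n matrices over k (n finite) that is closed under matrix multiplication. If the k-linear span of S contains an invertible matrix, then the k-linear span of S contains the identity matrix. -/
/-- If a set `S` of `n × n` matrices over a commutative ring `k` is closed under
matrix multiplication and the `k`-linear span of `S` contains an invertible matrix,
then the span of `S` contains the identity matrix. -/
theorem stmt0 (k : Type*) [CommRing k] (n : ℕ) (S : Set (Matrix (Fin n) (Fin n) k))
    (hmul : ∀ A ∈ S, ∀ B ∈ S, A * B ∈ S)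
    (hinv : ∃ M ∈ Submodule.span k S, IsUnit M) :
    (1 : Matrix (Fin n) (Fin n) k) ∈ Submodule.span k S := by
  obtain ⟨M, hM, hMu⟩ := hinv
  -- the span is closed under multiplication
  have hclosed : ∀ x ∈ Submodule.span k S, ∀ y ∈ Submodule.span k S,
      x * y ∈ Submodule.span k S := by
    intro x hx y hy
    have h1 : x * y ∈ Submodule.span k S * Submodule.span k S :=
      Submodule.mul_mem_mul hx hy
    rw [Submodule.span_mul_span] at h1
    refine Submodule.span_mono ?_ h1
    rintro z ⟨a, ha, b, hb, rfl⟩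
    exact hmul a ha b hb
  -- powers of M (positive exponents) are in the span
  have hpow : ∀ m : ℕ, M ^ (m + 1) ∈ Submodule.span k S := by
    intro m
    induction m with
    | zero => simpa using hM
    | succ m ih =>
      have := hclosed _ ih _ hM
      simpa [pow_succ] using this
  -- Cayley–Hamilton
  set p := M.charpoly with hp
  have hCH : Polynomial.aeval M p = 0 := Matrix.aeval_self_charpoly M
  have hsplit : p.divX * Polynomial.X + Polynomial.C (p.coeff 0) = p :=
    Polynomial.divX_mul_X_add p
  have hkey : Polynomial.aeval M p.divX * M = (-(p.coeff 0)) • (1 : Matrix (Fin n) (Fin n) k) := by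
    have := congrArg (Polynomial.aeval M) hsplit
    rw [hCH] at this
    simp only [map_add, map_mul, Polynomial.aeval_X, Polynomial.aeval_C] at this
    have h2 : Polynomial.aeval M p.divX * M = -(algebraMap k _ (p.coeff 0)) :=
      eq_neg_of_add_eq_zero_left this
    rw [h2, Algebra.algebraMap_eq_smul_one, neg_smul]
  -- coeff 0 of charpoly is a unit
  have hdet : IsUnit M.det := (Matrix.isUnit_iff_isUnit_det M).mp hMu
  have hc0 : IsUnit (p.coeff 0) := by
    have hd := Matrix.det_eq_sign_charpoly_coeff M
    have : IsUnit ((-1 : k) ^ Fintype.card (Fin n) * p.coeff 0) := by rwa [← hd]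
    exact isUnit_of_mul_isUnit_right this
  obtain ⟨u, hu⟩ := hc0.neg
  -- the LHS of hkey is in the span
  have hlhs : Polynomial.aeval M p.divX * M ∈ Submodule.span k S := by
    rw [Polynomial.aeval_eq_sum_range, Finset.sum_mul]
    refine Submodule.sum_mem _ ?_
    intro i _
    rw [smul_mul_assoc, ← pow_succ]
    exact Submodule.smul_mem _ _ (hpow i)
  have h1 : (1 : Matrix (Fin n) (Fin n) k) = (↑u⁻¹ : k) • (Polynomial.aeval M p.divX * M) := by
    rw [hkey, ← hu, smul_smul, Units.inv_mul, one_smul]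
  rw [h1]
  exact Submodule.smul_mem _ _ hlhs
end

section
/- Let D be a small category, k a commutative ring, and fix objects d, x, y of D. Then x ≤_d y holds if and only if, in the k-algebra (x,x) = k[Hom_D(x,x)], the element 1 (the identity arrow of x) lies in the sum of submodules ann_d(x,x) + (x,y,x), where ann_d(x,x) = { f ∈ (x,x) : (d,x)·f = 0 } is the right annihilator of (d,x) acting by postcomposition, and (x,y,x) is the k-span of endomorphisms of x factoring through y. -/
open CategoryTheory

/-- The 0-1 matrix `M_s` indexed by `Hom(d,x)` recording the pairs `(f,g)` with `s ∘ f = g`. -/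
noncomputable def Msmat {D : Type*} [Category D] (k : Type*) [CommRing k] (d x : D) (s : x ⟶ x) :
    Matrix (d ⟶ x) (d ⟶ x) k :=
  fun f g => letI := Classical.dec (f ≫ s = g); if f ≫ s = g then 1 else 0

/-- `x ≤_d y` : the identity matrix lies in the `k`-span of the matrices `M_s`
for `s` an endomorphism of `x` factoring through `y`. -/
def LeD {D : Type*} [Category D] (k : Type*) [CommRing k] (d x y : D) : Prop :=
  letI := Classical.decEq (d ⟶ x)
  (1 : Matrix (d ⟶ x) (d ⟶ x) k) ∈
    Submodule.span k {M : Matrix (d ⟶ x) (d ⟶ x) k |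
      ∃ (p : x ⟶ y) (q : y ⟶ x), M = Msmat k d x (p ≫ q)}

/-- The right annihilator of `(d,x)` inside `(x,x) = k[Hom(x,x)]`: elements killed by
postcomposition against every arrow `d ⟶ x` (extended bilinearly). -/
noncomputable def annD {D : Type*} [Category D] (k : Type*) [CommRing k] (d x : D) :
    Submodule k ((x ⟶ x) →₀ k) :=
  ⨅ g : d ⟶ x, LinearMap.ker (Finsupp.lmapDomain k k (fun s : x ⟶ x => g ≫ s))

/-- The `k`-span `(x,y,x)` of endomorphisms of `x` factoring through `y`. -/
noncomputable def factSpan {D : Type*} [Category D] (k : Type*) [CommRing k] (x y : D) :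
    Submodule k ((x ⟶ x) →₀ k) :=
  Submodule.span k {f : (x ⟶ x) →₀ k | ∃ (p : x ⟶ y) (q : y ⟶ x), f = Finsupp.single (p ≫ q) 1}

noncomputable def Phi {D : Type*} [Category D] (k : Type*) [CommRing k] (d x : D) :
    ((x ⟶ x) →₀ k) →ₗ[k] Matrix (d ⟶ x) (d ⟶ x) k :=
  Finsupp.linearCombination k (Msmat k d x)

lemma Phi_single {D : Type*} [Category D] (k : Type*) [CommRing k] (d x : D) (s : x ⟶ x) :
    Phi k d x (Finsupp.single s 1) = Msmat k d x s := by
  simp [Phi]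

open scoped Classical in
lemma Phi_apply {D : Type*} [Category D] (k : Type*) [CommRing k] (d x : D)
    (a : (x ⟶ x) →₀ k) (f g : d ⟶ x) :
    Phi k d x a f g = ∑ s ∈ a.support, (if f ≫ s = g then a s else 0) := by
  classical
  simp only [Phi, Finsupp.linearCombination_apply, Finsupp.sum, Matrix.sum_apply, Matrix.smul_apply,
    Msmat, smul_eq_mul, mul_ite, mul_one, mul_zero]

open scoped Classical in
lemma mapDomain_apply' {D : Type*} [Category D] (k : Type*) [CommRing k] {d x : D}
    (g : d ⟶ x) (a : (x ⟶ x) →₀ k) (h : d ⟶ x) :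
    Finsupp.mapDomain (fun s : x ⟶ x => g ≫ s) a h
      = ∑ s ∈ a.support, (if g ≫ s = h then a s else 0) := by
  classical
  rw [Finsupp.mapDomain, Finsupp.sum_apply, Finsupp.sum]
  exact Finset.sum_congr rfl fun s _ => by rw [Finsupp.single_apply]

lemma ker_Phi {D : Type*} [Category D] (k : Type*) [CommRing k] (d x : D) :
    LinearMap.ker (Phi k d x) = annD k d x := by
  classical
  ext a
  simp only [LinearMap.mem_ker, annD, Submodule.mem_iInf, LinearMap.mem_ker,
    Finsupp.lmapDomain_apply]
  constructor
  · intro hz g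
    ext h
    rw [mapDomain_apply', Finsupp.coe_zero, Pi.zero_apply]
    have := congrFun (congrFun hz g) h
    rwa [Phi_apply] at this
  · intro hz
    funext f g
    rw [Phi_apply]
    have := DFunLike.congr_fun (hz f) g
    rwa [mapDomain_apply'] at this

lemma mem_ker_add {R M N : Type*} [CommRing R] [AddCommGroup M] [Module R M]
    [AddCommGroup N] [Module R N] (φ : M →ₗ[R] N) (p : Submodule R M) (v : M) :
    v ∈ LinearMap.ker φ + p ↔ φ v ∈ Submodule.map φ p := by
  constructor
  · rintro hv
    obtain ⟨a, ha, b, hb, rfl⟩ := Submodule.mem_sup.mp hv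
    simp only [map_add, LinearMap.mem_ker.mp ha, zero_add]
    exact ⟨b, hb, rfl⟩
  · rintro ⟨b, hb, hbe⟩
    refine Submodule.mem_sup.mpr ⟨v - b, ?_, b, hb, by abel⟩
    rw [LinearMap.mem_ker, map_sub, hbe, sub_self]

/-- Alternative characterization of `≤_d`: `x ≤_d y` iff the identity arrow of `x`
lies in `ann_d(x,x) + (x,y,x)` inside `k[Hom(x,x)]`. -/
theorem stmt3 {D : Type*} [SmallCategory D] (k : Type*) [CommRing k] (d x y : D) :
    LeD k d x y ↔ Finsupp.single (𝟙 x) (1 : k) ∈ annD k d x + factSpan k x y := by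
  classical
  have hmap : Submodule.map (Phi k d x) (factSpan k x y)
      = Submodule.span k {M : Matrix (d ⟶ x) (d ⟶ x) k |
          ∃ (p : x ⟶ y) (q : y ⟶ x), M = Msmat k d x (p ≫ q)} := by
    rw [factSpan, Submodule.map_span]
    congr 1
    ext M
    constructor
    · rintro ⟨f, ⟨p, q, rfl⟩, rfl⟩
      exact ⟨p, q, (Phi_single k d x _)⟩
    · rintro ⟨p, q, rfl⟩
      exact ⟨Finsupp.single (p ≫ q) 1, ⟨p, q, rfl⟩, Phi_single k d x _⟩
  have hone : Phi k d x (Finsupp.single (𝟙 x) (1 : k)) = 1 := by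
    rw [Phi_single]
    funext f g
    simp [Msmat, Matrix.one_apply, Category.comp_id]
  rw [← ker_Phi, mem_ker_add, hone, hmap]
  rfl
end

section
/- Let D be a small category, k a commutative ring, and d an object. The relation ≤_d on objects of D is transitive: if x ≤_d y and y ≤_d z then x ≤_d z. -/
open CategoryTheory

lemma Msmat_key {D : Type*} [SmallCategory D] (k : Type*) [CommRing k] (d x y : D)
    [DecidableEq (d ⟶ y)]
    (p : x ⟶ y) (q : y ⟶ x) {n : ℕ} (e : Fin n → k) (s : Fin n → (y ⟶ y))
    (h1 : (∑ j, e j • Msmat k d y (s j)) = (1 : Matrix (d ⟶ y) (d ⟶ y) k)) :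
    Msmat k d x (p ≫ q) = ∑ j, e j • Msmat k d x (p ≫ s j ≫ q) := by
  classical
  ext f h
  have hentry : ∀ g : d ⟶ y,
      (∑ j, e j * (if f ≫ p ≫ s j = g then (1 : k) else 0)) =
        if f ≫ p = g then 1 else 0 := by
    intro g
    have := congrFun (congrFun h1 (f ≫ p)) g
    simpa [Msmat, Matrix.sum_apply, Matrix.one_apply, smul_eq_mul, Category.assoc] using this
  have hmain : (∑ j, e j * (if f ≫ p ≫ s j ≫ q = h then (1 : k) else 0)) =
      if f ≫ p ≫ q = h then 1 else 0 := by
    set G : Finset (d ⟶ y) :=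
      insert (f ≫ p) (Finset.image (fun j => f ≫ p ≫ s j) Finset.univ) with hG
    have hmaps : ∀ j ∈ (Finset.univ : Finset (Fin n)), f ≫ p ≫ s j ∈ G := by
      intro j _
      exact Finset.mem_insert_of_mem (Finset.mem_image_of_mem _ (Finset.mem_univ j))
    rw [← Finset.sum_fiberwise_of_maps_to hmaps]
    have hinner : ∀ g ∈ G,
        (∑ j ∈ Finset.univ.filter (fun j => f ≫ p ≫ s j = g),
          e j * (if f ≫ p ≫ s j ≫ q = h then (1 : k) else 0)) =
        (if f ≫ p = g then (1:k) else 0) * (if g ≫ q = h then (1:k) else 0) := by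
      intro g _
      have step1 : (∑ j ∈ Finset.univ.filter (fun j => f ≫ p ≫ s j = g),
          e j * (if f ≫ p ≫ s j ≫ q = h then (1 : k) else 0)) =
          (∑ j ∈ Finset.univ.filter (fun j => f ≫ p ≫ s j = g), e j) *
            (if g ≫ q = h then (1:k) else 0) := by
        rw [Finset.sum_mul]
        apply Finset.sum_congr rfl
        intro j hj
        have hj' : f ≫ p ≫ s j = g := (Finset.mem_filter.mp hj).2
        have : f ≫ p ≫ s j ≫ q = g ≫ q := by
          rw [← hj']; simp [Category.assoc]
        rw [this]
      rw [step1]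
      congr 1
      rw [Finset.sum_filter]
      have := hentry g
      rw [← this]
      apply Finset.sum_congr rfl
      intro j _
      by_cases hc : f ≫ p ≫ s j = g <;> simp [hc]
    rw [Finset.sum_congr rfl hinner]
    have hfpG : f ≫ p ∈ G := Finset.mem_insert_self _ _
    simp only [ite_mul, one_mul, zero_mul]
    rw [Finset.sum_ite_eq G (f ≫ p) (fun g => if g ≫ q = h then (1:k) else 0), if_pos hfpG]
    simp [Category.assoc]
  simpa [Msmat, Matrix.sum_apply, smul_eq_mul, Category.assoc] using hmain.symm

/-- The relation `≤_d` is transitive. -/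
theorem stmt5 {D : Type*} [SmallCategory D] (k : Type*) [CommRing k] (d x y z : D)
    (hxy : LeD k d x y) (hyz : LeD k d y z) : LeD k d x z := by
  classical
  unfold LeD at hxy hyz ⊢
  obtain ⟨n, e, g, hg⟩ := Submodule.mem_span_set'.mp hyz
  choose a b hab using fun j => (g j).2
  have h1 := hg
  simp only [hab] at h1
  have hsub : {M : Matrix (d ⟶ x) (d ⟶ x) k |
      ∃ (p : x ⟶ y) (q : y ⟶ x), M = Msmat k d x (p ≫ q)} ⊆
      ↑(Submodule.span k {M : Matrix (d ⟶ x) (d ⟶ x) k |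
      ∃ (p : x ⟶ z) (q : z ⟶ x), M = Msmat k d x (p ≫ q)}) := by
    rintro M ⟨p, q, rfl⟩
    rw [@Msmat_key D _ k _ d x y (Classical.decEq (d ⟶ y)) p q n e (fun j => a j ≫ b j) h1]
    refine Submodule.sum_mem _ fun j _ => Submodule.smul_mem _ _ (Submodule.subset_span ?_)
    exact ⟨p ≫ a j, b j ≫ q, by rw [Category.assoc]; simp [Category.assoc]⟩
  exact Submodule.span_le.mpr hsub hxy
end

section
/- Let D be a small category and k a commutative ring. If x ≤_d y and c ≤^x d, then x ≤_c y. -/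
open CategoryTheory

/-- `c ≤^x d` : the relation `c ≤_x d` computed in the opposite category `Dᵒᵖ`. -/
noncomputable def LeOp {D : Type*} [Category D] (k : Type*) [CommRing k] (x c d : D) : Prop :=
  LeD (D := Dᵒᵖ) k (Opposite.op x) (Opposite.op c) (Opposite.op d)

section Aux

variable {D : Type*} [Category D] (k : Type*) [CommRing k]

lemma Msmat_apply (d x : D) (s : x ⟶ x) (f g : d ⟶ x) :
    Msmat k d x s f g = (letI := Classical.propDecidable (f ≫ s = g);
      if f ≫ s = g then (1 : k) else 0) := by
  by_cases h : f ≫ s = g <;> simp [Msmat, h]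

lemma one_apply' (X : Type*) [DecidableEq X] (f g : X) :
    (1 : Matrix X X k) f g = (letI := Classical.propDecidable (f = g);
      if f = g then (1 : k) else 0) := by
  by_cases h : f = g <;> simp [Matrix.one_apply, h]

end Aux

/-- If `x ≤_d y` and `c ≤^x d`, then `x ≤_c y`. -/
theorem stmt7 {D : Type*} [SmallCategory D] (k : Type*) [CommRing k] (c d x y : D)
    (hxy : LeD k d x y) (hcd : LeOp k x c d) : LeD k c x y := by
  classical
  unfold LeOp at hcd
  unfold LeD at hxy hcd ⊢
  rw [Submodule.mem_span_set'] at hxy hcd ⊢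
  obtain ⟨n, a, Ms, hsum⟩ := hxy
  obtain ⟨m, b, Ns, hsum'⟩ := hcd
  choose p q hpq using fun i => (Ms i).2
  choose P Q hPQ using fun j => (Ns j).2
  set s : Fin n → (x ⟶ x) := fun i => p i ≫ q i with hs
  set u : Fin m → (c ⟶ d) := fun j => (Q j).unop with hu
  set v : Fin m → (d ⟶ c) := fun j => (P j).unop with hv
  -- entrywise form of hxy
  have hxy' : ∀ h w : d ⟶ x,
      (∑ i, a i * (if h ≫ s i = w then (1:k) else 0)) = (if h = w then (1:k) else 0) := by
    intro h w
    have := congrFun (congrFun hsum h) w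
    rw [Matrix.sum_apply] at this
    simp only [Matrix.smul_apply, smul_eq_mul] at this
    rw [one_apply'] at this
    calc (∑ i, a i * (if h ≫ s i = w then (1:k) else 0))
        = ∑ i, a i * ((Ms i : Matrix (d ⟶ x) (d ⟶ x) k) h w) := by
          refine Finset.sum_congr rfl fun i _ => ?_
          rw [hpq i, Msmat_apply]
      _ = if h = w then (1:k) else 0 := this
  -- entrywise form of hcd
  have hcd' : ∀ f g : c ⟶ x,
      (∑ j, b j * (if u j ≫ v j ≫ f = g then (1:k) else 0)) = (if f = g then (1:k) else 0) := by
    intro f g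
    have := congrFun (congrFun hsum' f.op) g.op
    rw [Matrix.sum_apply] at this
    simp only [Matrix.smul_apply, smul_eq_mul] at this
    rw [one_apply'] at this
    have hop : (f.op = g.op) ↔ (f = g) := Quiver.Hom.op_inj.eq_iff
    calc (∑ j, b j * (if u j ≫ v j ≫ f = g then (1:k) else 0))
        = ∑ j, b j * ((Ns j : Matrix _ _ k) f.op g.op) := by
          refine Finset.sum_congr rfl fun j _ => ?_
          rw [hPQ j, Msmat_apply]
          congr 1
          have hcond : (f.op ≫ (P j ≫ Q j) = g.op) ↔ (u j ≫ v j ≫ f = g) := by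
            rw [← Quiver.Hom.unop_inj.eq_iff]
            simp [hu, hv]
          by_cases hc : u j ≫ v j ≫ f = g
          · rw [if_pos hc, if_pos (hcond.mpr hc)]
          · rw [if_neg hc, if_neg (fun hh => hc (hcond.mp hh))]
      _ = if f = g then (1:k) else 0 := by
          rw [this]
          by_cases hc : f = g
          · rw [if_pos hc, if_pos (by rw [hc])]
          · rw [if_neg hc, if_neg (fun hh => hc (hop.mp hh))]
  -- key averaging lemma
  have key : ∀ (h : d ⟶ x) (φ : (d ⟶ x) → k), (∑ i, a i * φ (h ≫ s i)) = φ h := by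
    intro h φ
    set W : Finset (d ⟶ x) := insert h (Finset.image (fun i => h ≫ s i) Finset.univ) with hWdef
    have hW : ∀ i, h ≫ s i ∈ W := fun i =>
      Finset.mem_insert_of_mem (Finset.mem_image_of_mem _ (Finset.mem_univ i))
    have hhW : h ∈ W := Finset.mem_insert_self _ _
    calc (∑ i, a i * φ (h ≫ s i))
        = ∑ i, ∑ w ∈ W, a i * (if h ≫ s i = w then φ w else 0) := by
          refine Finset.sum_congr rfl fun i _ => ?_
          rw [← Finset.mul_sum]
          congr 1
          rw [Finset.sum_ite_eq W (h ≫ s i) φ, if_pos (hW i)]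
      _ = ∑ w ∈ W, ∑ i, a i * (if h ≫ s i = w then φ w else 0) := Finset.sum_comm
      _ = ∑ w ∈ W, (∑ i, a i * (if h ≫ s i = w then (1:k) else 0)) * φ w := by
          refine Finset.sum_congr rfl fun w _ => ?_
          rw [Finset.sum_mul]
          refine Finset.sum_congr rfl fun i _ => ?_
          by_cases hc : h ≫ s i = w <;> simp [hc, mul_comm, mul_assoc]
      _ = ∑ w ∈ W, (if h = w then (1:k) else 0) * φ w := by
          refine Finset.sum_congr rfl fun w _ => ?_
          rw [hxy' h w]
      _ = φ h := by
          have : ∀ w ∈ W, (if h = w then (1:k) else 0) * φ w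
              = (if h = w then φ w else 0) := by
            intro w _
            by_cases hc : h = w <;> simp [hc]
          rw [Finset.sum_congr rfl this, Finset.sum_ite_eq W h φ, if_pos hhW]
  -- build the witness
  refine ⟨n, a, fun i => ⟨Msmat k c x (s i), p i, q i, rfl⟩, ?_⟩
  ext f g
  rw [Matrix.sum_apply, one_apply']
  simp only [Matrix.smul_apply, smul_eq_mul]
  calc (∑ i, a i * (Msmat k c x (s i) f g))
      = ∑ i, a i * (if f ≫ s i = g then (1:k) else 0) := by
        refine Finset.sum_congr rfl fun i _ => ?_
        rw [Msmat_apply]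
    _ = ∑ i, a i * (∑ j, b j * (if u j ≫ v j ≫ (f ≫ s i) = g then (1:k) else 0)) := by
        refine Finset.sum_congr rfl fun i _ => ?_
        rw [hcd' (f ≫ s i) g]
    _ = ∑ j, b j * (∑ i, a i * (if u j ≫ (v j ≫ f) ≫ s i = g then (1:k) else 0)) := by
        simp_rw [Finset.mul_sum]
        rw [Finset.sum_comm]
        refine Finset.sum_congr rfl fun j _ => Finset.sum_congr rfl fun i _ => ?_
        rw [Category.assoc]
        ring
    _ = ∑ j, b j * (if u j ≫ v j ≫ f = g then (1:k) else 0) := by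
        refine Finset.sum_congr rfl fun j _ => ?_
        congr 1
        have := key (v j ≫ f) (fun w => if u j ≫ w = g then (1:k) else 0)
        simpa using this
    _ = if f = g then (1:k) else 0 := hcd' f g
end

section
/- In the simplex category Δ over any commutative ring k, for every n ≥ 1 we have [n+2] ≤_{[n]} [n+1]: the identity matrix indexed by the monotone maps [n] → [n+2] lies in the k-span of the matrices M_s, where s ranges over monotone endomorphisms of [n+2] that factor through [n+1], and M_s has (f,g)-entry 1 iff s∘f = g. -/
open CategoryTheory

namespace Stmt11Aux

open SimplexCategory Finset

variable {m : ℕ}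

/-- The image of `S` in `Fin (m+3)` under `castSucc`. -/
def T (S : Finset (Fin (m + 2))) : Finset (Fin (m + 3)) := S.image Fin.castSucc

lemma mem_T {S : Finset (Fin (m + 2))} {i : Fin (m + 3)} :
    i ∈ T S ↔ ∃ j ∈ S, Fin.castSucc j = i := Finset.mem_image

lemma lt_of_mem_T {S : Finset (Fin (m + 2))} {i : Fin (m + 3)} (h : i ∈ T S) :
    (i : ℕ) < m + 2 := by
  obtain ⟨j, _, rfl⟩ := mem_T.1 h
  simp

/-- The map `h_S` adding one on the positions in `S`. -/
def hfun (S : Finset (Fin (m + 2))) (i : Fin (m + 3)) : Fin (m + 3) :=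
  if i ∈ T S then i + 1 else i

lemma hfun_val (S : Finset (Fin (m + 2))) (i : Fin (m + 3)) :
    (hfun S i : ℕ) = if i ∈ T S then (i : ℕ) + 1 else (i : ℕ) := by
  unfold hfun
  split_ifs with h
  · exact Fin.val_add_one_of_lt (by
      rw [Fin.lt_def, Fin.val_last]; exact lt_of_mem_T h)
  · rfl

lemma hfun_mono (S : Finset (Fin (m + 2))) : Monotone (hfun S) := by
  intro a b hab
  rw [Fin.le_def] at hab ⊢
  rw [hfun_val, hfun_val]
  by_cases ha : a ∈ T S <;> by_cases hb : b ∈ T S <;>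
    simp only [ha, hb, if_true, if_false]
  · omega
  · rcases Nat.lt_or_ge (a : ℕ) (b : ℕ) with h | h
    · omega
    · have : a = b := Fin.ext (le_antisymm hab h)
      subst this; exact absurd ha hb
  · omega
  · omega

/-- The morphism `h_S` in the simplex category. -/
def hmor (S : Finset (Fin (m + 2))) : SimplexCategory.mk (m + 2) ⟶ SimplexCategory.mk (m + 2) :=
  SimplexCategory.Hom.mk ⟨hfun S, hfun_mono S⟩

lemma hmor_app (S : Finset (Fin (m + 2))) (i : Fin (m + 3)) :
    (hmor S).toOrderHom i = hfun S i := rfl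

lemma hmor_empty : hmor (∅ : Finset (Fin (m + 2))) = 𝟙 (SimplexCategory.mk (m + 2)) := by
  apply SimplexCategory.Hom.ext
  ext i
  simp [hmor, hfun, T]

lemma exists_free (f : SimplexCategory.mk m ⟶ SimplexCategory.mk (m + 2)) :
    ∃ j : Fin (m + 2), ∀ i : Fin (m + 1), f.toOrderHom i ≠ Fin.castSucc j := by
  by_contra hc
  push_neg at hc
  choose g hg using hc
  have hginj : Function.Injective g := by
    intro a b hab
    have : Fin.castSucc a = Fin.castSucc b := by rw [← hg a, ← hg b, hab]
    exact Fin.castSucc_injective _ this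
  have := Fintype.card_le_of_injective g hginj
  simp [Fintype.card_fin] at this

/-- The involution toggling membership of `j`. -/
def invo (j : Fin (m + 2)) (S : Finset (Fin (m + 2))) : Finset (Fin (m + 2)) :=
  if j ∈ S then S.erase j else insert j S

lemma mem_invo_of_ne {j j' : Fin (m + 2)} (h : j' ≠ j) (S : Finset (Fin (m + 2))) :
    (j' ∈ invo j S ↔ j' ∈ S) := by
  unfold invo
  split_ifs <;> simp [Finset.mem_erase, Finset.mem_insert, h]

lemma invo_invo (j : Fin (m + 2)) (S : Finset (Fin (m + 2))) : invo j (invo j S) = S := by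
  unfold invo
  split_ifs with h h2 h3
  · simp at h2
  · exact Finset.insert_erase h
  · exact Finset.erase_insert h
  · simp at h3

lemma invo_ne (j : Fin (m + 2)) (S : Finset (Fin (m + 2))) : invo j S ≠ S := by
  unfold invo
  split_ifs with h
  · intro he
    have := Finset.notMem_erase j S
    rw [he] at this; exact this h
  · intro he
    exact h (he ▸ Finset.mem_insert_self j S)

lemma sign_invo (k : Type*) [CommRing k] (j : Fin (m + 2)) (S : Finset (Fin (m + 2))) :
    ((-1 : k) ^ (invo j S).card) = -(-1 : k) ^ S.card := by
  unfold invo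
  split_ifs with h
  · rw [Finset.card_erase_of_mem h]
    obtain ⟨c, hc⟩ : ∃ c, S.card = c + 1 :=
      ⟨S.card - 1, (Nat.succ_pred_eq_of_pos (Finset.card_pos.2 ⟨j, h⟩)).symm⟩
    rw [hc]
    simp [pow_succ]
  · rw [Finset.card_insert_of_notMem h, pow_succ]
    ring

lemma hfun_invo {j : Fin (m + 2)} {x : Fin (m + 3)} (hx : x ≠ Fin.castSucc j)
    (S : Finset (Fin (m + 2))) : hfun (invo j S) x = hfun S x := by
  have hmem : x ∈ T (invo j S) ↔ x ∈ T S := by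
    rw [mem_T, mem_T]
    constructor
    · rintro ⟨j', hj', rfl⟩
      have : j' ≠ j := fun he => hx (by rw [he])
      exact ⟨j', (mem_invo_of_ne this S).1 hj', rfl⟩
    · rintro ⟨j', hj', rfl⟩
      have : j' ≠ j := fun he => hx (by rw [he])
      exact ⟨j', (mem_invo_of_ne this S).2 hj', rfl⟩
  unfold hfun
  rw [if_congr hmem rfl rfl]

lemma comp_hmor_invo {j : Fin (m + 2)} (f : SimplexCategory.mk m ⟶ SimplexCategory.mk (m + 2))
    (hj : ∀ i : Fin (m + 1), f.toOrderHom i ≠ Fin.castSucc j) (S : Finset (Fin (m + 2))) :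
    f ≫ hmor (invo j S) = f ≫ hmor S := by
  apply SimplexCategory.Hom.ext
  ext i
  exact congrArg Fin.val (hfun_invo (hj i) S)

lemma sum_zero (k : Type*) [CommRing k] (m : ℕ) :
    ∑ S : Finset (Fin (m + 2)), ((-1 : k) ^ S.card) •
      Msmat k (SimplexCategory.mk m) (SimplexCategory.mk (m + 2)) (hmor S) = 0 := by
  ext f g
  rw [Matrix.sum_apply, Matrix.zero_apply]
  obtain ⟨j₀, hj₀⟩ := exists_free f
  apply Finset.sum_involution (fun S _ => invo j₀ S)
  · intro S _
    have hcomp : f ≫ hmor (invo j₀ S) = f ≫ hmor S := comp_hmor_invo f hj₀ S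
    simp only [Matrix.smul_apply, smul_eq_mul, Msmat]
    rw [hcomp, sign_invo]
    ring
  · intro S _ _
    exact invo_ne j₀ S
  · intro S _
    exact Finset.mem_univ _
  · intro S _
    exact invo_invo j₀ S

lemma Msmat_empty (k : Type*) [CommRing k] (m : ℕ)
    [DecidableEq (SimplexCategory.mk m ⟶ SimplexCategory.mk (m + 2))] :
    Msmat k (SimplexCategory.mk m) (SimplexCategory.mk (m + 2))
      (hmor (∅ : Finset (Fin (m + 2)))) = 1 := by
  ext f g
  simp only [Msmat, hmor_empty, Category.comp_id, Matrix.one_apply]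

lemma one_eq (k : Type*) [CommRing k] (m : ℕ)
    [DecidableEq (SimplexCategory.mk m ⟶ SimplexCategory.mk (m + 2))] :
    (1 : Matrix (SimplexCategory.mk m ⟶ SimplexCategory.mk (m + 2))
        (SimplexCategory.mk m ⟶ SimplexCategory.mk (m + 2)) k) =
      ∑ S ∈ (Finset.univ : Finset (Finset (Fin (m + 2)))).erase ∅,
        (-(-1 : k) ^ S.card) •
          Msmat k (SimplexCategory.mk m) (SimplexCategory.mk (m + 2)) (hmor S) := by
  have h := sum_zero k m
  rw [← Finset.add_sum_erase _ _ (Finset.mem_univ (∅ : Finset (Fin (m + 2))))] at h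
  have h0 : ((-1 : k) ^ (∅ : Finset (Fin (m + 2))).card) •
      Msmat k (SimplexCategory.mk m) (SimplexCategory.mk (m + 2)) (hmor ∅) = 1 := by
    rw [Msmat_empty k m]
    simp
  rw [h0] at h
  have h2 := eq_neg_of_add_eq_zero_left h
  rw [h2, ← Finset.sum_neg_distrib]
  exact Finset.sum_congr rfl fun S _ => (neg_smul _ _).symm

lemma hfun_ne_min (S : Finset (Fin (m + 2))) (hS : S.Nonempty) (i : Fin (m + 3)) :
    hfun S i ≠ Fin.castSucc (S.min' hS) := by
  by_cases h : i ∈ T S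
  · obtain ⟨j', hj', rfl⟩ := mem_T.1 h
    intro he
    have h1 : (hfun S (Fin.castSucc j') : ℕ) = (j' : ℕ) + 1 := by
      rw [hfun_val, if_pos h]; simp
    have hle : (S.min' hS : ℕ) ≤ (j' : ℕ) := S.min'_le j' hj'
    have h2 : (hfun S (Fin.castSucc j') : ℕ) = (S.min' hS : ℕ) := by
      rw [he]; simp
    omega
  · intro he
    have hi : hfun S i = i := if_neg h
    rw [hi] at he
    exact h (he ▸ mem_T.2 ⟨_, S.min'_mem hS, rfl⟩)

lemma hmor_factor (S : Finset (Fin (m + 2))) (hS : S.Nonempty) :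
    (hmor S ≫ SimplexCategory.σ (S.min' hS)) ≫ SimplexCategory.δ (Fin.castSucc (S.min' hS)) =
      hmor S := by
  apply SimplexCategory.Hom.ext
  ext i
  exact congrArg Fin.val (Fin.succAbove_predAbove (hfun_ne_min S hS i))

end Stmt11Aux

/-- In the simplex category, `[n+2] ≤_{[n]} [n+1]` over any commutative ring.  (Mathlib's
`SimplexCategory.mk m` has `m+1` elements, so the paper's `[n]`, `[n+2]`, `[n+1]` with
`n ≥ 1` become `mk m`, `mk (m+2)`, `mk (m+1)` for `m = n - 1 ≥ 0`.) -/
theorem stmt11 (k : Type*) [CommRing k] (m : ℕ) :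
    LeD k (SimplexCategory.mk m) (SimplexCategory.mk (m + 2)) (SimplexCategory.mk (m + 1)) := by
  unfold LeD
  rw [@Stmt11Aux.one_eq k _ m (Classical.decEq _)]
  apply Submodule.sum_mem
  intro S hS
  apply Submodule.smul_mem
  apply Submodule.subset_span
  have hSne : S.Nonempty := Finset.nonempty_of_ne_empty (Finset.ne_of_mem_erase hS)
  exact ⟨Stmt11Aux.hmor S ≫ SimplexCategory.σ (S.min' hSne),
    SimplexCategory.δ (Fin.castSucc (S.min' hSne)),
    by rw [Stmt11Aux.hmor_factor S hSne]⟩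
end
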